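/- A subset F ⊆ Q_θ is closed if and only if it satisfies all of the following conditions: (i) F ∩ Γ₁, F ∩ Γ₂, and F ∩ Γ₃ are closed in the subspace topologies of Γ₁, Γ₂, and Γ₃ respectively; (ii) if a point q((x₀), τ₀) ∈ Γ₂ ∪ Γ₃ (with x₀ ∈ ℂ², τ₀ ∈ ℝ) lies in the closure of F ∩ Γ₁, then q(x₀, τ) ∈ F for all τ ∈ ℝ; (iii) if a point q((0,0), τ₀) ∈ Γ₃ lies in the closure of F ∩ Γ₂', then q((0,0), τ₀ + k) ∈ F for all k ∈ ℤ; (iv) if a point q((0,0), τ₀) ∈ Γ₃ lies in the closure of F ∩ Γ₂'', then q((0,0), τ₀ + θk) ∈ F for all k ∈ ℤ. -/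

import Mathlib

open Filter Topology

/-- The equivalence relation `∼` on `ℂ² × ℝ`: `((z₁,z₂),τ) ∼ ((w₁,w₂),σ)` iff
`|z₁| = |w₁|`, `|z₂| = |w₂|`, and moreover `τ - σ ∈ ℤ` when `z₁ ≠ 0 = z₂`,
`τ - σ ∈ θℤ` when `z₁ = 0 ≠ z₂`, and `τ = σ` when `z₁ = z₂ = 0`. -/
def mrel (θ : ℝ) (p q : (ℂ × ℂ) × ℝ) : Prop :=
  ‖p.1.1‖ = ‖q.1.1‖ ∧
  ‖p.1.2‖ = ‖q.1.2‖ ∧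
  (p.1.1 ≠ 0 ∧ p.1.2 = 0 → ∃ k : ℤ, p.2 - q.2 = (k : ℝ)) ∧
  (p.1.1 = 0 ∧ p.1.2 ≠ 0 → ∃ k : ℤ, p.2 - q.2 = θ * (k : ℝ)) ∧
  (p.1.1 = 0 ∧ p.1.2 = 0 → p.2 = q.2)

theorem mrel_equivalence (θ : ℝ) : Equivalence (mrel θ) := by
  constructor
  · exact fun p => ⟨rfl, rfl, fun _ => ⟨0, by simp⟩, fun _ => ⟨0, by simp⟩, fun _ => rfl⟩
  · rintro p q ⟨h1, h2, h3, h4, h5⟩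
    have key : ∀ a b : ℂ, ‖a‖ = ‖b‖ → (a = 0 ↔ b = 0) := by
      intro a b h
      rw [← norm_eq_zero, h, norm_eq_zero]
    have e1 : p.1.1 = 0 ↔ q.1.1 = 0 := key _ _ h1
    have e2 : p.1.2 = 0 ↔ q.1.2 = 0 := key _ _ h2
    refine ⟨h1.symm, h2.symm, ?_, ?_, ?_⟩
    · rintro ⟨hq1, hq2⟩
      obtain ⟨k, hk⟩ := h3 ⟨fun h => hq1 (e1.mp h), e2.mpr hq2⟩
      exact ⟨-k, by push_cast; linarith⟩
    · rintro ⟨hq1, hq2⟩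
      obtain ⟨k, hk⟩ := h4 ⟨e1.mpr hq1, fun h => hq2 (e2.mp h)⟩
      exact ⟨-k, by push_cast; linarith⟩
    · rintro ⟨hq1, hq2⟩
      exact (h5 ⟨e1.mpr hq1, e2.mpr hq2⟩).symm
  · rintro p q r ⟨h1, h2, h3, h4, h5⟩ ⟨g1, g2, g3, g4, g5⟩
    have key : ∀ a b : ℂ, ‖a‖ = ‖b‖ → (a = 0 ↔ b = 0) := by
      intro a b h
      rw [← norm_eq_zero, h, norm_eq_zero]
    have e1 : p.1.1 = 0 ↔ q.1.1 = 0 := key _ _ h1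
    have e2 : p.1.2 = 0 ↔ q.1.2 = 0 := key _ _ h2
    refine ⟨h1.trans g1, h2.trans g2, ?_, ?_, ?_⟩
    · rintro ⟨hp1, hp2⟩
      obtain ⟨k, hk⟩ := h3 ⟨hp1, hp2⟩
      obtain ⟨l, hl⟩ := g3 ⟨fun h => hp1 (e1.mpr h), e2.mp hp2⟩
      exact ⟨k + l, by push_cast; linarith⟩
    · rintro ⟨hp1, hp2⟩
      obtain ⟨k, hk⟩ := h4 ⟨hp1, hp2⟩
      obtain ⟨l, hl⟩ := g4 ⟨e1.mp hp1, fun h => hp2 (e2.mpr h)⟩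
      refine ⟨k + l, by push_cast; linarith [mul_add θ (k : ℝ) (l : ℝ)]⟩
    · rintro ⟨hp1, hp2⟩
      exact (h5 ⟨hp1, hp2⟩).trans (g5 ⟨e1.mp hp1, e2.mp hp2⟩)

/-- The setoid on `ℂ² × ℝ` given by the relation `∼`. -/
def mSetoid (θ : ℝ) : Setoid ((ℂ × ℂ) × ℝ) := ⟨mrel θ, mrel_equivalence θ⟩

/-- The quotient space `Q_θ = (ℂ² × ℝ)/∼`, with the quotient topology. -/
abbrev Qspace (θ : ℝ) : Type := Quotient (mSetoid θ)

/-- The quotient map `q : ℂ² × ℝ → Q_θ`. -/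
def qmap (θ : ℝ) : (ℂ × ℂ) × ℝ → Qspace θ := Quotient.mk (mSetoid θ)


/-- `Γ₁ = q({((z₁,z₂),τ) : z₁ ≠ 0 and z₂ ≠ 0})`. -/
def Gamma1 (θ : ℝ) : Set (Qspace θ) := qmap θ '' {p | p.1.1 ≠ 0 ∧ p.1.2 ≠ 0}

/-- `Γ₂' = q({((z₁,z₂),τ) : z₁ ≠ 0 = z₂})`. -/
def Gamma2' (θ : ℝ) : Set (Qspace θ) := qmap θ '' {p | p.1.1 ≠ 0 ∧ p.1.2 = 0}

/-- `Γ₂'' = q({((z₁,z₂),τ) : z₁ = 0 ≠ z₂})`. -/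
def Gamma2'' (θ : ℝ) : Set (Qspace θ) := qmap θ '' {p | p.1.1 = 0 ∧ p.1.2 ≠ 0}

/-- `Γ₂ = Γ₂' ∪ Γ₂''`. -/
def Gamma2 (θ : ℝ) : Set (Qspace θ) := Gamma2' θ ∪ Gamma2'' θ

/-- `Γ₃ = q({((0,0),τ) : τ ∈ ℝ})`. -/
def Gamma3 (θ : ℝ) : Set (Qspace θ) := qmap θ '' {p | p.1.1 = 0 ∧ p.1.2 = 0}

/-
The quotient map `q` is open. Indeed, if `p ∼ u`, then multiplying the two complex coordinates by
unimodular constants and translating `τ` by `u.2 - p.2` is a homeomorphism taking `p` to `u` and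
every point near `p` to an equivalent point: nearby points have no more vanishing coordinates than
`p`, so they admit at least the `τ`-translations that `p` admits. Consequently
`q⁻¹(closure (F ∩ q S)) = closure (q⁻¹ F ∩ S)` for each stratum `S`. If `F` is closed, (ii)–(iv)
follow by applying to `q⁻¹ F` the continuous maps `(x, t) ↦ (x, τ)`, `(x, t + k)`, `(x, t + θk)`,
which preserve `∼`-classes on the respective strata. Conversely a point of `closure F` lies in the
closure of some `F ∩ Γ`; the closure of a stratum only adds points with more vanishing
coordinates, where (i)–(iv) apply.
-/

open Set

theorem Complex.exists_norm_eq_one_mul_eq {z w : ℂ} (h : ‖z‖ = ‖w‖) :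
    ∃ a : ℂ, ‖a‖ = 1 ∧ a * z = w := by
  rcases eq_or_ne z 0 with rfl | hz
  · exact ⟨1, norm_one, by simpa [eq_comm] using h⟩
  · refine ⟨w / z, ?_, div_mul_cancel₀ w hz⟩
    rw [norm_div, h, div_self (h ▸ norm_ne_zero_iff.mpr hz)]

theorem mem_of_isClosed_subtype_of_mem_closure {X : Type*} [TopologicalSpace X] {F G : Set X}
    (hF : IsClosed {x : G | (x : X) ∈ F}) {y : X} (hy : y ∈ G) (h : y ∈ closure (F ∩ G)) :
    y ∈ F := by
  have hy' : (⟨y, hy⟩ : G) ∈ closure {x : G | (x : X) ∈ F} := by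
    rw [closure_subtype]
    change y ∈ closure (Subtype.val '' (Subtype.val ⁻¹' F))
    rwa [Subtype.image_preimage_coe, inter_comm]
  exact hF.closure_subset hy'

namespace mrel

variable {θ : ℝ} {p u : (ℂ × ℂ) × ℝ}

theorem fst_eq_zero_iff (h : mrel θ p u) : p.1.1 = 0 ↔ u.1.1 = 0 := by
  rw [← norm_eq_zero, h.1, norm_eq_zero]

theorem snd_eq_zero_iff (h : mrel θ p u) : p.1.2 = 0 ↔ u.1.2 = 0 := by
  rw [← norm_eq_zero, h.2.1, norm_eq_zero]

end mrel

section OpenQuotientMap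

variable {θ : ℝ}

theorem mrel_rotate {a b : ℂ} (ha : ‖a‖ = 1) (hb : ‖b‖ = 1) (p : (ℂ × ℂ) × ℝ) :
    mrel θ p ((a * p.1.1, b * p.1.2), p.2) :=
  ⟨by simp [ha], by simp [hb], fun _ => ⟨0, by simp⟩, fun _ => ⟨0, by simp⟩, fun _ => rfl⟩

theorem mrel_add_of_zero_imp {p q : (ℂ × ℂ) × ℝ} {c : ℝ} (h₁ : q.1.1 = 0 → p.1.1 = 0)
    (h₂ : q.1.2 = 0 → p.1.2 = 0) (hp : mrel θ p (p.1, p.2 + c)) :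
    mrel θ q (q.1, q.2 + c) := by
  obtain ⟨-, -, hp₂', hp₂'', hp₃⟩ := hp
  refine ⟨rfl, rfl, fun hq => ?_, fun hq => ?_, fun hq => ?_⟩
  · by_cases hp₁ : p.1.1 = 0
    · obtain rfl : c = 0 := by simpa using hp₃ ⟨hp₁, h₂ hq.2⟩
      exact ⟨0, by simp⟩
    · simpa using hp₂' ⟨hp₁, h₂ hq.2⟩
  · by_cases hp₂ : p.1.2 = 0
    · obtain rfl : c = 0 := by simpa using hp₃ ⟨h₁ hq.1, hp₂⟩
      exact ⟨0, by simp⟩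
    · simpa using hp₂'' ⟨h₁ hq.1, hp₂⟩
  · simpa using hp₃ ⟨h₁ hq.1, h₂ hq.2⟩

theorem exists_continuous_eventually_mrel {p u : (ℂ × ℂ) × ℝ} (h : mrel θ p u) :
    ∃ ψ : (ℂ × ℂ) × ℝ → (ℂ × ℂ) × ℝ, Continuous ψ ∧ ψ p = u ∧ ∀ᶠ q in 𝓝 p, mrel θ q (ψ q) := by
  obtain ⟨a, ha, hau⟩ := Complex.exists_norm_eq_one_mul_eq h.1
  obtain ⟨b, hb, hbu⟩ := Complex.exists_norm_eq_one_mul_eq h.2.1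
  set c := u.2 - p.2
  have hψp : ((a * p.1.1, b * p.1.2), p.2 + c) = u := by
    ext <;> simp [c, *]
  have hc : mrel θ p (p.1, p.2 + c) :=
    (mrel_equivalence θ).trans h ((mrel_equivalence θ).symm (hψp ▸ mrel_rotate ha hb _))
  have h₁ : ∀ᶠ q in 𝓝 p, q.1.1 = 0 → p.1.1 = 0 := by
    rcases eq_or_ne p.1.1 0 with hp | hp
    · exact .of_forall fun _ _ => hp
    · exact ((continuous_fst.fst.continuousAt).eventually_ne hp).mono fun q hq h => absurd h hq
  have h₂ : ∀ᶠ q in 𝓝 p, q.1.2 = 0 → p.1.2 = 0 := by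
    rcases eq_or_ne p.1.2 0 with hp | hp
    · exact .of_forall fun _ _ => hp
    · exact ((continuous_fst.snd.continuousAt).eventually_ne hp).mono fun q hq h => absurd h hq
  refine ⟨fun q => ((a * q.1.1, b * q.1.2), q.2 + c), by fun_prop, hψp, ?_⟩
  filter_upwards [h₁, h₂] with q hq₁ hq₂
  exact (mrel_equivalence θ).trans (mrel_add_of_zero_imp hq₁ hq₂ hc) (mrel_rotate ha hb _)

theorem qmap_eq_qmap_iff {p u : (ℂ × ℂ) × ℝ} : qmap θ p = qmap θ u ↔ mrel θ p u :=
  Quotient.eq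

theorem qmap_surjective : Function.Surjective (qmap θ) :=
  Quotient.mk_surjective

theorem continuous_qmap : Continuous (qmap θ) :=
  continuous_quotient_mk'

theorem isOpenMap_qmap : IsOpenMap (qmap θ) := by
  intro U hU
  rw [← isQuotientMap_quotient_mk'.isOpen_preimage, isOpen_iff_mem_nhds]
  rintro p ⟨u, hu, hup⟩
  obtain ⟨ψ, hψ, rfl, hψp⟩ := exists_continuous_eventually_mrel (qmap_eq_qmap_iff.1 hup.symm)
  filter_upwards [hψ.continuousAt.preimage_mem_nhds (hU.mem_nhds hu), hψp] with q hqU hq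
  exact ⟨ψ q, hqU, (qmap_eq_qmap_iff.2 hq).symm⟩

end OpenQuotientMap

/-- The sets defining `Γ₁`, `Γ₂'`, `Γ₂''`, `Γ₃` are `stratum P` for suitable `P`. -/
def stratum (P : Prop → Prop → Prop) : Set ((ℂ × ℂ) × ℝ) := {p | P (p.1.1 = 0) (p.1.2 = 0)}

section Strata

variable {θ : ℝ} {F : Set (Qspace θ)} {p : (ℂ × ℂ) × ℝ}

theorem preimage_qmap_image_stratum (P : Prop → Prop → Prop) :
    qmap θ ⁻¹' (qmap θ '' stratum P) = stratum P := by
  refine Subset.antisymm ?_ (subset_preimage_image _ _)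
  rintro p ⟨u, hu, hup⟩
  have h := qmap_eq_qmap_iff.1 hup
  simpa only [stratum, mem_ofPred_eq, propext h.fst_eq_zero_iff, propext h.snd_eq_zero_iff] using hu

theorem preimage_closure_inter_image_stratum (F : Set (Qspace θ)) (P : Prop → Prop → Prop) :
    qmap θ ⁻¹' closure (F ∩ qmap θ '' stratum P) = closure (qmap θ ⁻¹' F ∩ stratum P) := by
  rw [isOpenMap_qmap.preimage_closure_eq_closure_preimage continuous_qmap, preimage_inter,
    preimage_qmap_image_stratum]

theorem qmap_mem_of_mem_closure_inter_image_stratum (hF : IsClosed F) (P : Prop → Prop → Prop)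
    {g : (ℂ × ℂ) × ℝ → (ℂ × ℂ) × ℝ} (hg : Continuous g) (hgP : ∀ q ∈ stratum P, mrel θ (g q) q)
    (h : qmap θ p ∈ closure (F ∩ qmap θ '' stratum P)) : qmap θ (g p) ∈ F := by
  have hp : p ∈ closure (qmap θ ⁻¹' F ∩ stratum P) := by
    rwa [← preimage_closure_inter_image_stratum]
  have hmaps : MapsTo g (qmap θ ⁻¹' F ∩ stratum P) (qmap θ ⁻¹' F) := fun q ⟨hqF, hq⟩ => by
    rwa [mem_preimage, qmap_eq_qmap_iff.2 (hgP q hq)]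
  exact (hF.preimage continuous_qmap).closure_subset (map_mem_closure hg hp hmaps)

theorem mem_of_mem_closure_inter_image_stratum {P : Prop → Prop → Prop}
    {C : Set ((ℂ × ℂ) × ℝ)} (hC : IsClosed C) (hPC : stratum P ⊆ C)
    (h : qmap θ p ∈ closure (F ∩ qmap θ '' stratum P)) : p ∈ C := by
  have hp : p ∈ closure (qmap θ ⁻¹' F ∩ stratum P) := by
    rwa [← preimage_closure_inter_image_stratum]
  exact closure_minimal (inter_subset_right.trans hPC) hC hp

theorem qmap_mem_of_mem_closure_inter_Gamma1 (hF : IsClosed F) {x : ℂ × ℂ} {τ₀ : ℝ}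
    (h : qmap θ (x, τ₀) ∈ closure (F ∩ Gamma1 θ)) (τ : ℝ) : qmap θ (x, τ) ∈ F :=
  qmap_mem_of_mem_closure_inter_image_stratum hF (fun a b => ¬a ∧ ¬b) (g := fun q => (q.1, τ))
    (by fun_prop) (fun _ hq => ⟨rfl, rfl, fun h => absurd h.2 hq.2, fun h => absurd h.1 hq.1,
      fun h => absurd h.1 hq.1⟩) h

theorem qmap_add_intCast_mem_of_mem_closure_inter_Gamma2' (hF : IsClosed F) {x : ℂ × ℂ} {τ₀ : ℝ}
    (h : qmap θ (x, τ₀) ∈ closure (F ∩ Gamma2' θ)) (k : ℤ) : qmap θ (x, τ₀ + k) ∈ F :=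
  qmap_mem_of_mem_closure_inter_image_stratum hF (fun a b => ¬a ∧ b)
    (g := fun q => (q.1, q.2 + k)) (by fun_prop) (fun _ hq => ⟨rfl, rfl, fun _ => ⟨k, by simp⟩,
      fun h => absurd h.1 hq.1, fun h => absurd h.1 hq.1⟩) h

theorem qmap_add_mul_intCast_mem_of_mem_closure_inter_Gamma2'' (hF : IsClosed F) {x : ℂ × ℂ}
    {τ₀ : ℝ} (h : qmap θ (x, τ₀) ∈ closure (F ∩ Gamma2'' θ)) (k : ℤ) :
    qmap θ (x, τ₀ + θ * k) ∈ F :=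
  qmap_mem_of_mem_closure_inter_image_stratum hF (fun a b => a ∧ ¬b)
    (g := fun q => (q.1, q.2 + θ * k)) (by fun_prop) (fun _ hq => ⟨rfl, rfl,
      fun h => absurd h.2 hq.2, fun _ => ⟨k, by simp⟩, fun h => absurd h.2 hq.2⟩) h

theorem snd_eq_zero_of_mem_closure_inter_Gamma2' (h : qmap θ p ∈ closure (F ∩ Gamma2' θ)) :
    p.1.2 = 0 :=
  mem_of_mem_closure_inter_image_stratum (P := fun a b => ¬a ∧ b) (C := {q | q.1.2 = 0})
    (isClosed_eq (by fun_prop) continuous_const) (fun _ hq => hq.2) h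

theorem fst_eq_zero_of_mem_closure_inter_Gamma2'' (h : qmap θ p ∈ closure (F ∩ Gamma2'' θ)) :
    p.1.1 = 0 :=
  mem_of_mem_closure_inter_image_stratum (P := fun a b => a ∧ ¬b) (C := {q | q.1.1 = 0})
    (isClosed_eq (by fun_prop) continuous_const) (fun _ hq => hq.1) h

theorem eq_zero_of_mem_closure_inter_Gamma3 (h : qmap θ p ∈ closure (F ∩ Gamma3 θ)) :
    p.1 = 0 :=
  mem_of_mem_closure_inter_image_stratum (P := fun a b => a ∧ b) (C := {q | q.1 = 0})
    (isClosed_eq (by fun_prop) continuous_const) (fun _ hq => Prod.ext hq.1 hq.2) h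

theorem Gamma_union_eq_univ : Gamma1 θ ∪ Gamma2' θ ∪ Gamma2'' θ ∪ Gamma3 θ = univ := by
  refine eq_univ_of_forall fun y => ?_
  obtain ⟨p, rfl⟩ := qmap_surjective y
  by_cases h₁ : p.1.1 = 0 <;> by_cases h₂ : p.1.2 = 0
  · exact .inr ⟨p, ⟨h₁, h₂⟩, rfl⟩
  · exact .inl (.inr ⟨p, ⟨h₁, h₂⟩, rfl⟩)
  · exact .inl (.inl (.inr ⟨p, ⟨h₁, h₂⟩, rfl⟩))
  · exact .inl (.inl (.inl ⟨p, ⟨h₁, h₂⟩, rfl⟩))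

theorem closure_eq_union_closure_inter_Gamma (F : Set (Qspace θ)) :
    closure F = closure (F ∩ Gamma1 θ) ∪ closure (F ∩ Gamma2' θ) ∪ closure (F ∩ Gamma2'' θ) ∪
      closure (F ∩ Gamma3 θ) := by
  conv_lhs => rw [← inter_univ F, ← Gamma_union_eq_univ]
  simp only [inter_union_distrib_left, closure_union]

theorem qmap_mem_Gamma2_union_Gamma3 (h : ¬(p.1.1 ≠ 0 ∧ p.1.2 ≠ 0)) :
    qmap θ p ∈ Gamma2 θ ∪ Gamma3 θ := by
  by_cases h₁ : p.1.1 = 0 <;> by_cases h₂ : p.1.2 = 0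
  · exact .inr ⟨p, ⟨h₁, h₂⟩, rfl⟩
  · exact .inl (.inr ⟨p, ⟨h₁, h₂⟩, rfl⟩)
  · exact .inl (.inl ⟨p, ⟨h₁, h₂⟩, rfl⟩)
  · exact absurd ⟨h₁, h₂⟩ h

end Strata

theorem isClosed_iff_Qspace_general (θ : ℝ) (F : Set (Qspace θ)) :
    IsClosed F ↔
      ((IsClosed {x : (Gamma1 θ) | (x : Qspace θ) ∈ F} ∧
        IsClosed {x : (Gamma2 θ) | (x : Qspace θ) ∈ F} ∧
        IsClosed {x : (Gamma3 θ) | (x : Qspace θ) ∈ F}) ∧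
      (∀ (x₀ : ℂ × ℂ) (τ₀ : ℝ), qmap θ (x₀, τ₀) ∈ Gamma2 θ ∪ Gamma3 θ →
        qmap θ (x₀, τ₀) ∈ closure (F ∩ Gamma1 θ) → ∀ τ : ℝ, qmap θ (x₀, τ) ∈ F) ∧
      (∀ τ₀ : ℝ, qmap θ ((0, 0), τ₀) ∈ closure (F ∩ Gamma2' θ) →
        ∀ k : ℤ, qmap θ ((0, 0), τ₀ + (k : ℝ)) ∈ F) ∧
      (∀ τ₀ : ℝ, qmap θ ((0, 0), τ₀) ∈ closure (F ∩ Gamma2'' θ) →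
        ∀ k : ℤ, qmap θ ((0, 0), τ₀ + θ * (k : ℝ)) ∈ F)) := by
  refine ⟨fun hF => ⟨⟨hF.preimage continuous_subtype_val, hF.preimage continuous_subtype_val,
    hF.preimage continuous_subtype_val⟩, fun _ _ _ => qmap_mem_of_mem_closure_inter_Gamma1 hF,
    fun _ => qmap_add_intCast_mem_of_mem_closure_inter_Gamma2' hF,
    fun _ => qmap_add_mul_intCast_mem_of_mem_closure_inter_Gamma2'' hF⟩, ?_⟩
  rintro ⟨⟨hc₁, hc₂, hc₃⟩, hii, hiii, hiv⟩
  refine isClosed_of_closure_subset fun y hy => ?_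
  obtain ⟨⟨⟨z₁, z₂⟩, τ⟩, rfl⟩ := qmap_surjective y
  rw [closure_eq_union_closure_inter_Gamma] at hy
  rcases hy with ((h | h) | h) | h
  · by_cases hz : z₁ ≠ 0 ∧ z₂ ≠ 0
    · exact mem_of_isClosed_subtype_of_mem_closure hc₁ ⟨_, hz, rfl⟩ h
    · exact hii _ τ (qmap_mem_Gamma2_union_Gamma3 hz) h τ
  · obtain rfl : z₂ = 0 := snd_eq_zero_of_mem_closure_inter_Gamma2' h
    by_cases hz₁ : z₁ = 0
    · subst hz₁
      simpa using hiii τ h 0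
    · exact mem_of_isClosed_subtype_of_mem_closure hc₂ (.inl ⟨_, ⟨hz₁, rfl⟩, rfl⟩)
        (closure_mono (inter_subset_inter_right _ subset_union_left) h)
  · obtain rfl : z₁ = 0 := fst_eq_zero_of_mem_closure_inter_Gamma2'' h
    by_cases hz₂ : z₂ = 0
    · subst hz₂
      simpa using hiv τ h 0
    · exact mem_of_isClosed_subtype_of_mem_closure hc₂ (.inr ⟨_, ⟨rfl, hz₂⟩, rfl⟩)
        (closure_mono (inter_subset_inter_right _ subset_union_right) h)
  · obtain ⟨rfl, rfl⟩ := Prod.ext_iff.1 (eq_zero_of_mem_closure_inter_Gamma3 h)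
    exact mem_of_isClosed_subtype_of_mem_closure hc₃ ⟨_, ⟨rfl, rfl⟩, rfl⟩ h

/-- A subset `F ⊆ Q_θ` is closed if and only if:
(i) `F ∩ Γ₁`, `F ∩ Γ₂` and `F ∩ Γ₃` are closed in the subspace topologies of `Γ₁`, `Γ₂`, `Γ₃`;
(ii) if `q(x₀, τ₀) ∈ Γ₂ ∪ Γ₃` lies in the closure of `F ∩ Γ₁`, then `q(x₀, τ) ∈ F` for
all `τ ∈ ℝ`;
(iii) if `q((0,0), τ₀) ∈ Γ₃` lies in the closure of `F ∩ Γ₂'`, then `q((0,0), τ₀ + k) ∈ F`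
for all `k ∈ ℤ`;
(iv) if `q((0,0), τ₀) ∈ Γ₃` lies in the closure of `F ∩ Γ₂''`, then `q((0,0), τ₀ + θk) ∈ F`
for all `k ∈ ℤ`. -/
theorem isClosed_iff_Qspace (θ : ℝ) (hθ : Irrational θ) (F : Set (Qspace θ)) :
    IsClosed F ↔
      ((IsClosed {x : (Gamma1 θ) | (x : Qspace θ) ∈ F} ∧
        IsClosed {x : (Gamma2 θ) | (x : Qspace θ) ∈ F} ∧
        IsClosed {x : (Gamma3 θ) | (x : Qspace θ) ∈ F}) ∧
      (∀ (x₀ : ℂ × ℂ) (τ₀ : ℝ), qmap θ (x₀, τ₀) ∈ Gamma2 θ ∪ Gamma3 θ →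
        qmap θ (x₀, τ₀) ∈ closure (F ∩ Gamma1 θ) → ∀ τ : ℝ, qmap θ (x₀, τ) ∈ F) ∧
      (∀ τ₀ : ℝ, qmap θ ((0, 0), τ₀) ∈ closure (F ∩ Gamma2' θ) →
        ∀ k : ℤ, qmap θ ((0, 0), τ₀ + (k : ℝ)) ∈ F) ∧
      (∀ τ₀ : ℝ, qmap θ ((0, 0), τ₀) ∈ closure (F ∩ Gamma2'' θ) →
        ∀ k : ℤ, qmap θ ((0, 0), τ₀ + θ * (k : ℝ)) ∈ F)) :=
  isClosed_iff_Qspace_general θ F
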